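/- arXiv:2302.01091 — 2 statements merged into one kernel-verified Lean document; each statement's English description precedes it below -/
import Mathlib

section
/- For real y, z with 0 ≤ y < 1 and 0 ≤ z < 1 (the 2D triangle VPV identity, case a=0, b=1): ∑_{(j,k): 1 ≤ j ≤ k, gcd(j,k)=1} (1/k) · log(1/(1 - y^j z^k)) = (y/(1-y)) · log((1-yz)/(1-z)). Equivalently, ∏_{1≤j≤k, gcd(j,k)=1} (1/(1 - y^j z^k))^{1/k} = ((1-yz)/(1-z))^{y/(1-y)}. -/
/-!
Expanding `log (1 / (1 - x)) = ∑_{m ≥ 1} x ^ m / m` turns the left-hand side into the sum of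
`y ^ (m j) z ^ (m k) / (m k)` over coprime `j ≤ k` and `m ≥ 1`. Every pair `1 ≤ a ≤ n` is
uniquely `m • (j, k)` with `m = gcd a n` and `j, k` coprime, so this is the sum of
`y ^ a z ^ n / n` over `1 ≤ a ≤ n`. Summed row by row it is
`∑_n (∑_{a ≤ n} y ^ a) z ^ n / n = y / (1 - y) ∑_n (z ^ n - (y z) ^ n) / n
  = y / (1 - y) log ((1 - y z) / (1 - z))`;
all terms are nonnegative, which justifies the rearrangements. Exponentiating gives the product.
-/

open Real

theorem hasSum_pow_div_pnat {x : ℝ} (hx : |x| < 1) :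
    HasSum (fun m : ℕ+ => x ^ (m : ℕ) / m) (-log (1 - x)) := by
  rw [hasSum_pnat_iff_hasSum_succ (f := fun m : ℕ => x ^ m / m)]
  simpa using hasSum_pow_div_log_of_abs_lt_one hx

theorem hasSum_ite_pow_le {y : ℝ} (hy : y ≠ 1) (n : ℕ) :
    HasSum (fun a : ℕ+ => if (a : ℕ) ≤ n then y ^ (a : ℕ) else 0)
      (y * (1 - y ^ n) / (1 - y)) := by
  rw [hasSum_pnat_iff_hasSum_succ (f := fun a : ℕ => if a ≤ n then y ^ a else 0)]
  have hsum : ∑ i ∈ Finset.range n, (if i + 1 ≤ n then y ^ (i + 1) else 0)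
      = y * (1 - y ^ n) / (1 - y) := by
    rw [Finset.sum_congr rfl fun i hi => if_pos (Nat.succ_le_of_lt (Finset.mem_range.mp hi))]
    simp only [pow_succ', ← Finset.mul_sum, geom_sum_eq hy]
    field_simp [sub_ne_zero.mpr hy, sub_ne_zero.mpr hy.symm]
    ring
  exact hsum ▸ hasSum_sum_of_ne_finset_zero fun i hi => if_neg (by simpa using hi)

theorem abs_pow_mul_pow_lt_one {y z : ℝ} (hy : |y| ≤ 1) (hz : |z| < 1) (j : ℕ) {k : ℕ}
    (hk : k ≠ 0) : |y ^ j * z ^ k| < 1 := by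
  rw [abs_mul, abs_pow, abs_pow]
  exact mul_lt_one_of_nonneg_of_lt_one_right (pow_le_one₀ (abs_nonneg y) hy)
    (by positivity) (pow_lt_one₀ (abs_nonneg z) hz hk)

/-- The summand `[a ≤ n] y ^ a z ^ n / n` of `∑_n (∑_{a=1}^n y ^ a) z ^ n / n` at `q = (n, a)`. -/
noncomputable def triangleTerm (y z : ℝ) (q : ℕ+ × ℕ+) : ℝ :=
  (if (q.2 : ℕ) ≤ q.1 then y ^ (q.2 : ℕ) else 0) * (z ^ (q.1 : ℕ) / q.1)

theorem hasSum_triangleTerm {y z : ℝ} (hy0 : 0 ≤ y) (hy1 : y < 1) (hz0 : 0 ≤ z)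
    (hz1 : z < 1) :
    HasSum (triangleTerm y z) (y / (1 - y) * log ((1 - y * z) / (1 - z))) := by
  have hyz : y * z < 1 := by nlinarith
  have hrows : ∀ n : ℕ+, HasSum (fun a => triangleTerm y z (n, a))
      (y / (1 - y) * (z ^ (n : ℕ) / n - (y * z) ^ (n : ℕ) / n)) := by
    intro n
    have h := (hasSum_ite_pow_le hy1.ne n).mul_right (z ^ (n : ℕ) / n)
    rwa [show y * (1 - y ^ (n : ℕ)) / (1 - y) * (z ^ (n : ℕ) / n)
      = y / (1 - y) * (z ^ (n : ℕ) / n - (y * z) ^ (n : ℕ) / n) by ring] at h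
  have hcols : HasSum (fun n : ℕ+ => y / (1 - y) * (z ^ (n : ℕ) / n - (y * z) ^ (n : ℕ) / n))
      (y / (1 - y) * log ((1 - y * z) / (1 - z))) := by
    have h := ((hasSum_pow_div_pnat (abs_lt.mpr ⟨by linarith, hz1⟩)).sub
      (hasSum_pow_div_pnat (abs_lt.mpr ⟨by nlinarith, hyz⟩))).mul_left (y / (1 - y))
    rwa [neg_sub_neg, ← log_div (by linarith) (by linarith)] at h
  have hnonneg : 0 ≤ triangleTerm y z := fun q => by
    unfold triangleTerm; split_ifs <;> positivity
  have hsummable : Summable (triangleTerm y z) :=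
    (summable_prod_of_nonneg hnonneg).mpr
      ⟨fun n => (hrows n).summable,
        by simpa only [fun n => (hrows n).tsum_eq] using hcols.summable⟩
  exact (hsummable.hasSum.prod_fiberwise hrows).unique hcols ▸ hsummable.hasSum

theorem PNat.exists_coprime_mul (a n : ℕ+) :
    ∃ j k m : ℕ+, Nat.Coprime j k ∧ a = m * j ∧ n = m * k := by
  obtain ⟨j, hj⟩ := PNat.gcd_dvd_left a n
  obtain ⟨k, hk⟩ := PNat.gcd_dvd_right a n
  refine ⟨j, k, _, ?_, hj, hk⟩
  have h : ((a.gcd n : ℕ+) : ℕ)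
      = Nat.gcd ((a.gcd n * j : ℕ+) : ℕ) ((a.gcd n * k : ℕ+) : ℕ) := by
    rw [← hj, ← hk, PNat.gcd_coe]
  rw [PNat.mul_coe, PNat.mul_coe, Nat.gcd_mul_left] at h
  exact (Nat.mul_eq_left (PNat.ne_zero _)).mp h.symm

theorem PNat.eq_of_mul_eq_mul_of_coprime {j₁ k₁ m₁ j₂ k₂ m₂ : ℕ+}
    (h₁ : Nat.Coprime j₁ k₁) (h₂ : Nat.Coprime j₂ k₂)
    (hj : m₁ * j₁ = m₂ * j₂) (hk : m₁ * k₁ = m₂ * k₂) :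
    m₁ = m₂ ∧ j₁ = j₂ ∧ k₁ = k₂ := by
  have hm : m₁ = m₂ := by
    apply PNat.coe_injective
    have := congr_arg₂ (fun a b : ℕ+ => Nat.gcd a b) hj hk
    simpa [Nat.gcd_mul_left, h₁, h₂] using this
  subst hm
  exact ⟨rfl, mul_left_cancel hj, mul_left_cancel hk⟩

abbrev TriangleVisiblePoint : Type :=
  {p : ℕ+ × ℕ+ // p.1 ≤ p.2 ∧ Nat.gcd (p.1 : ℕ) (p.2 : ℕ) = 1}

namespace TriangleVisiblePoint

def scale (p : TriangleVisiblePoint) (m : ℕ+) : ℕ+ × ℕ+ := (m * p.1.2, m * p.1.1)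

theorem scale_injective : Function.Injective (Function.uncurry scale) := by
  rintro ⟨⟨⟨j₁, k₁⟩, _, h₁⟩, m₁⟩ ⟨⟨⟨j₂, k₂⟩, _, h₂⟩, m₂⟩ heq
  obtain ⟨hk, hj⟩ := Prod.mk.inj heq
  obtain ⟨rfl, rfl, rfl⟩ := PNat.eq_of_mul_eq_mul_of_coprime h₁ h₂ hj hk
  rfl

theorem mem_range_scale {q : ℕ+ × ℕ+} (hq : q.2 ≤ q.1) :
    q ∈ Set.range (Function.uncurry scale) := by
  obtain ⟨j, k, m, hjk, ha, hn⟩ := PNat.exists_coprime_mul q.2 q.1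
  refine ⟨(⟨(j, k), le_of_mul_le_mul_left' (ha ▸ hn ▸ hq), hjk⟩, m), ?_⟩
  simp [scale, ← ha, ← hn]

theorem hasSum_triangleTerm_scale {y z : ℝ} (hy : |y| ≤ 1) (hz : |z| < 1)
    (p : TriangleVisiblePoint) :
    HasSum (fun m => triangleTerm y z (p.scale m))
      (1 / p.1.2 * log (1 / (1 - y ^ (p.1.1 : ℕ) * z ^ (p.1.2 : ℕ)))) := by
  have hterm : ∀ m : ℕ+, triangleTerm y z (p.scale m)
      = 1 / p.1.2 * ((y ^ (p.1.1 : ℕ) * z ^ (p.1.2 : ℕ)) ^ (m : ℕ) / m) := by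
    intro m
    have hle : (m * p.1.1 : ℕ) ≤ m * p.1.2 := Nat.mul_le_mul_left _ p.2.1
    simp only [triangleTerm, scale, PNat.mul_coe, hle, ↓reduceIte, mul_pow, ← pow_mul']
    push_cast
    field_simp
  rw [funext hterm, one_div (1 - _), log_inv]
  exact (hasSum_pow_div_pnat (abs_pow_mul_pow_lt_one hy hz _ p.1.2.ne_zero)).mul_left _

theorem hasSum_one_div_mul_log {y z : ℝ} (hy0 : 0 ≤ y) (hy1 : y < 1) (hz0 : 0 ≤ z)
    (hz1 : z < 1) :
    HasSum (fun p : TriangleVisiblePoint =>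
        1 / (p.1.2 : ℝ) * log (1 / (1 - y ^ (p.1.1 : ℕ) * z ^ (p.1.2 : ℕ))))
      (y / (1 - y) * log ((1 - y * z) / (1 - z))) := by
  have hvanish : ∀ q ∉ Set.range (Function.uncurry scale), triangleTerm y z q = 0 := fun q hq => by
    rw [triangleTerm, if_neg fun h => hq (mem_range_scale (PNat.coe_le_coe _ _ |>.mp h)), zero_mul]
  have hpairs := (scale_injective.hasSum_iff hvanish).mpr (hasSum_triangleTerm hy0 hy1 hz0 hz1)
  exact hpairs.prod_fiberwise <|
    hasSum_triangleTerm_scale (abs_le.mpr ⟨by linarith, hy1.le⟩) (abs_lt.mpr ⟨by linarith, hz1⟩)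

end TriangleVisiblePoint

theorem stmt_9 (y z : ℝ) (hy0 : 0 ≤ y) (hy1 : y < 1) (hz0 : 0 ≤ z) (hz1 : z < 1) :
    (∑' p : {p : ℕ+ × ℕ+ // p.1 ≤ p.2 ∧ Nat.gcd (p.1 : ℕ) (p.2 : ℕ) = 1},
        (1 / (p.val.2 : ℝ)) *
          Real.log (1 / (1 - y ^ (p.val.1 : ℕ) * z ^ (p.val.2 : ℕ))) =
      y / (1 - y) * Real.log ((1 - y * z) / (1 - z))) ∧
    (∏' p : {p : ℕ+ × ℕ+ // p.1 ≤ p.2 ∧ Nat.gcd (p.1 : ℕ) (p.2 : ℕ) = 1},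
        (1 / (1 - y ^ (p.val.1 : ℕ) * z ^ (p.val.2 : ℕ))) ^ ((1 : ℝ) / (p.val.2 : ℝ)) =
      ((1 - y * z) / (1 - z)) ^ (y / (1 - y))) := by
  have hS := TriangleVisiblePoint.hasSum_one_div_mul_log hy0 hy1 hz0 hz1
  refine ⟨hS.tsum_eq, ?_⟩
  have hbase (p : TriangleVisiblePoint) : 0 < 1 / (1 - y ^ (p.1.1 : ℕ) * z ^ (p.1.2 : ℕ)) := by
    have := abs_pow_mul_pow_lt_one (abs_le.mpr ⟨by linarith, hy1.le⟩)
      (abs_lt.mpr ⟨by linarith, hz1⟩) (p.1.1 : ℕ) p.1.2.ne_zero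
    exact one_div_pos.mpr (sub_pos.mpr (abs_lt.mp this).2)
  have hyz : 0 < (1 - y * z) / (1 - z) := div_pos (by nlinarith) (by linarith)
  simp_rw [rpow_def_of_pos (hbase _), rpow_def_of_pos hyz, mul_comm (log _)]
  exact hS.rexp.tprod_eq
end

section
/- For real y, z with 0 ≤ y < 1, 0 ≤ z < 1: ∏_{(m,n): 1 ≤ m ≤ n, gcd(m,n)=1} (1/(1 - y^m z^n))^{m/n^2} = (1 - yz)^{y/(1-y)} · exp{ (y/(1-y)^2) · (Li₂(z) - Li₂(yz)) }, where Li₂(w) = ∑_{k=1}^∞ w^k/k². Equivalently in logarithmic form: ∑_{1≤m≤n, gcd(m,n)=1} (m/n²)·log(1/(1-y^m z^n)) = (y/(1-y))·log(1-yz) + (y/(1-y)²)·(Li₂(z) - Li₂(yz)). -/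
/-!
Expanding `log (1 / (1 - x)) = ∑_{j ≥ 1} x ^ j / j` turns the left-hand side into a sum over
triples `(m, n, j)`. Since `(j m, j n)` runs exactly once through all pairs `M ≤ N` of positive
integers and `(m / n²) · (y ^ m z ^ n) ^ j / j = (M / N²) · y ^ M z ^ N`, the sum equals
`∑_{M ≤ N} (M / N²) y ^ M z ^ N`. Summing over `M` first, the finite Euler sum
`∑_{M ≤ N} M y ^ M = (y - (N + 1) y ^ (N + 1) + N y ^ (N + 2)) / (1 - y)²` leaves
`y / (1 - y)² · (z ^ N - (y z) ^ N) / N² - y / (1 - y) · (y z) ^ N / N`, whose sum over `N` is the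
right-hand side. All terms are nonnegative, so these rearrangements are legitimate; the product
form follows by exponentiating.
-/

/-- The dilogarithm `Li₂(w) = ∑_{k≥1} w^k / k²`. -/
noncomputable def Li2 (w : ℝ) : ℝ := ∑' k : ℕ+, w ^ (k : ℕ) / (k : ℝ) ^ 2

open Real

lemma hasSum_pnat_pow_div {x : ℝ} (hx : |x| < 1) :
    HasSum (fun j : ℕ+ => x ^ (j : ℕ) / (j : ℝ)) (-log (1 - x)) := by
  rw [hasSum_pnat_iff_hasSum_succ (f := fun j : ℕ => x ^ j / (j : ℝ))]
  simpa using hasSum_pow_div_log_of_abs_lt_one hx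

lemma hasSum_Li2 {w : ℝ} (hw : |w| ≤ 1) :
    HasSum (fun k : ℕ+ => w ^ (k : ℕ) / (k : ℝ) ^ 2) (Li2 w) := by
  refine (Summable.of_norm_bounded
    ((summable_one_div_nat_pow.mpr one_lt_two).comp_injective PNat.coe_injective)
    fun k => ?_).hasSum
  rw [norm_div, norm_pow, norm_pow, Real.norm_eq_abs, Real.norm_natCast]
  show _ ≤ 1 / _
  gcongr
  exact pow_le_one₀ (abs_nonneg w) hw

lemma one_sub_sq_mul_sum_Icc_mul_pow {R : Type*} [CommRing R] (y : R) (n : ℕ) :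
    (1 - y) ^ 2 * ∑ m ∈ Finset.Icc 1 n, (m : R) * y ^ m =
      y - (n + 1) * y ^ (n + 1) + n * y ^ (n + 2) := by
  induction n with
  | zero => simp
  | succ n ih =>
    rw [Finset.sum_Icc_succ_top (by omega), mul_add, ih]
    push_cast
    ring

lemma hasSum_ite_le_pnat {α : Type*} [AddCommMonoid α] [TopologicalSpace α] (g : ℕ → α)
    (N : ℕ+) :
    HasSum (fun M : ℕ+ => if M ≤ N then g M else 0) (∑ m ∈ Finset.Icc 1 (N : ℕ), g m) := by
  have h := hasSum_sum_of_ne_finset_zero (L := SummationFilter.unconditional ℕ+)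
    (f := fun M : ℕ+ => if M ≤ N then g M else 0) (s := Finset.Icc 1 N)
    fun M hM => if_neg fun h => hM (Finset.mem_Icc.2 ⟨one_le, h⟩)
  rw [Finset.sum_congr rfl fun M hM => if_pos (Finset.mem_Icc.1 hM).2] at h
  convert h using 1
  rw [← PNat.one_coe, ← PNat.map_subtype_embedding_Icc]
  exact Finset.sum_map _ _ _

lemma hasSum_of_prod_fiberwise_of_nonneg {β γ : Type*} {f : β × γ → ℝ} {g : β → ℝ} {a : ℝ}
    (hf : 0 ≤ f) (hfib : ∀ b, HasSum (fun c => f (b, c)) (g b)) (hg : HasSum g a) :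
    HasSum f a := by
  have hs : Summable f := (summable_prod_of_nonneg hf).2
    ⟨fun b => (hfib b).summable, by simpa only [fun b => (hfib b).tsum_eq] using hg.summable⟩
  rw [hg.unique (hs.hasSum.prod_fiberwise hfib)]
  exact hs.hasSum

noncomputable def coprimeMulEquiv :
    {p : ℕ+ × ℕ+ // p.1 ≤ p.2 ∧ Nat.gcd p.1 p.2 = 1} × ℕ+ ≃ {p : ℕ+ × ℕ+ // p.1 ≤ p.2} :=
  Equiv.ofBijective (fun x => ⟨(x.1.1.1 * x.2, x.1.1.2 * x.2), mul_le_mul_left x.1.2.1 _⟩) <| by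
    constructor
    · intro ⟨⟨⟨m, n⟩, _, hmn⟩, j⟩ ⟨⟨⟨m', n'⟩, _, hmn'⟩, j'⟩ h
      simp only [Subtype.mk.injEq, Prod.mk.injEq, ← PNat.coe_inj, PNat.mul_coe] at h
      obtain ⟨hm, hn⟩ := h
      have hj : (j : ℕ) = j' := calc
        (j : ℕ) = Nat.gcd (m * j) (n * j) := by rw [Nat.gcd_mul_right, hmn, one_mul]
        _ = Nat.gcd (m' * j') (n' * j') := by rw [hm, hn]
        _ = j' := by rw [Nat.gcd_mul_right, hmn', one_mul]
      simp_all [← PNat.coe_inj]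
    · rintro ⟨⟨M, N⟩, hMN⟩
      obtain ⟨g, m, n, hg, hmn, hM, hN⟩ := Nat.exists_coprime' (Nat.gcd_pos_of_pos_left N M.pos)
      have hm : 0 < m := Nat.pos_of_mul_pos_right (hM ▸ M.pos)
      have hn : 0 < n := Nat.pos_of_mul_pos_right (hN ▸ N.pos)
      refine ⟨⟨⟨(⟨m, hm⟩, ⟨n, hn⟩), ?_, hmn⟩, ⟨g, hg⟩⟩, ?_⟩
      · exact Nat.le_of_mul_le_mul_right (hM ▸ hN ▸ hMN) hg
      · ext
        exacts [PNat.eq hM.symm, PNat.eq hN.symm]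

@[simp]
lemma coe_coprimeMulEquiv_apply (x : {p : ℕ+ × ℕ+ // p.1 ≤ p.2 ∧ Nat.gcd p.1 p.2 = 1} × ℕ+) :
    (coprimeMulEquiv x : ℕ+ × ℕ+) = (x.1.1.1 * x.2, x.1.1.2 * x.2) :=
  rfl

section

variable {y z : ℝ}

lemma pow_mul_pow_lt_one (hy0 : 0 ≤ y) (hy1 : y ≤ 1) (hz0 : 0 ≤ z) (hz1 : z < 1) (m : ℕ)
    {n : ℕ} (hn : n ≠ 0) : y ^ m * z ^ n < 1 :=
  mul_lt_one_of_nonneg_of_lt_one_right (pow_le_one₀ hy0 hy1) (by positivity)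
    (pow_lt_one₀ hz0 hz1 hn)

lemma hasSum_ite_le_mul_pow_mul_pow (hy : y ≠ 1) (N : ℕ+) :
    HasSum
      (fun M : ℕ+ => if M ≤ N then (M : ℝ) / (N : ℝ) ^ 2 * (y ^ (M : ℕ) * z ^ (N : ℕ)) else 0)
      (y / (1 - y) ^ 2 * (z ^ (N : ℕ) / (N : ℝ) ^ 2 - (y * z) ^ (N : ℕ) / (N : ℝ) ^ 2) -
        y / (1 - y) * ((y * z) ^ (N : ℕ) / N)) := by
  convert hasSum_ite_le_pnat (fun m : ℕ => (m : ℝ) / (N : ℝ) ^ 2 * (y ^ m * z ^ (N : ℕ))) N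
    using 1
  have hy' : 1 - y ≠ 0 := sub_ne_zero.2 hy.symm
  have heuler : ∑ m ∈ Finset.Icc 1 (N : ℕ), (m : ℝ) * y ^ m =
      (y - (N + 1) * y ^ ((N : ℕ) + 1) + N * y ^ ((N : ℕ) + 2)) / (1 - y) ^ 2 := by
    rw [eq_div_iff (pow_ne_zero 2 hy'), mul_comm, one_sub_sq_mul_sum_Icc_mul_pow]
  have hsum : ∑ m ∈ Finset.Icc 1 (N : ℕ), (m : ℝ) / (N : ℝ) ^ 2 * (y ^ m * z ^ (N : ℕ)) =
      z ^ (N : ℕ) / (N : ℝ) ^ 2 * ∑ m ∈ Finset.Icc 1 (N : ℕ), (m : ℝ) * y ^ m := by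
    rw [Finset.mul_sum]
    exact Finset.sum_congr rfl fun m _ => by ring
  rw [hsum, heuler, mul_pow, pow_succ, pow_succ]
  field_simp
  ring

lemma hasSum_pairs_le (hy0 : 0 ≤ y) (hy1 : y < 1) (hz0 : 0 ≤ z) (hz1 : z < 1) :
    HasSum (fun p : {p : ℕ+ × ℕ+ // p.1 ≤ p.2} =>
        (p.1.1 : ℝ) / (p.1.2 : ℝ) ^ 2 * (y ^ (p.1.1 : ℕ) * z ^ (p.1.2 : ℕ)))
      (y / (1 - y) * log (1 - y * z) + y / (1 - y) ^ 2 * (Li2 z - Li2 (y * z))) := by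
  have hz : |z| ≤ 1 := by rw [abs_of_nonneg hz0]; exact hz1.le
  have hyz : |y * z| < 1 := by
    rw [abs_of_nonneg (by positivity)]
    exact mul_lt_one_of_nonneg_of_lt_one_left hy0 hy1 hz1.le
  have hsum := (((hasSum_Li2 hz).sub (hasSum_Li2 hyz.le)).mul_left (y / (1 - y) ^ 2)).sub
    ((hasSum_pnat_pow_div hyz).mul_left (y / (1 - y)))
  have hswap := hasSum_of_prod_fiberwise_of_nonneg
    (f := fun p : ℕ+ × ℕ+ =>
      if p.2 ≤ p.1 then (p.2 : ℝ) / (p.1 : ℝ) ^ 2 * (y ^ (p.2 : ℕ) * z ^ (p.1 : ℕ)) else 0)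
    (fun p => by dsimp only; split_ifs <;> positivity)
    (hasSum_ite_le_mul_pow_mul_pow hy1.ne) hsum
  have hle : HasSum ({p : ℕ+ × ℕ+ | p.1 ≤ p.2}.indicator
      fun p => (p.1 : ℝ) / (p.2 : ℝ) ^ 2 * (y ^ (p.1 : ℕ) * z ^ (p.2 : ℕ)))
      (y / (1 - y) * log (1 - y * z) + y / (1 - y) ^ 2 * (Li2 z - Li2 (y * z))) := by
    rw [← (Equiv.prodComm ℕ+ ℕ+).hasSum_iff]
    convert hswap using 1
    · ext p
      simp [Set.indicator_apply]
    · ring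
  rwa [← hasSum_subtype_iff_indicator] at hle

lemma hasSum_coprime_pairs_log (hy0 : 0 ≤ y) (hy1 : y < 1) (hz0 : 0 ≤ z) (hz1 : z < 1) :
    HasSum (fun p : {p : ℕ+ × ℕ+ // p.1 ≤ p.2 ∧ Nat.gcd (p.1 : ℕ) (p.2 : ℕ) = 1} =>
        (p.1.1 : ℝ) / (p.1.2 : ℝ) ^ 2 * log (1 / (1 - y ^ (p.1.1 : ℕ) * z ^ (p.1.2 : ℕ))))
      (y / (1 - y) * log (1 - y * z) + y / (1 - y) ^ 2 * (Li2 z - Li2 (y * z))) := by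
  refine (coprimeMulEquiv.hasSum_iff.mpr (hasSum_pairs_le hy0 hy1 hz0 hz1)).prod_fiberwise
    fun p => ?_
  have hx : |y ^ (p.1.1 : ℕ) * z ^ (p.1.2 : ℕ)| < 1 := by
    rw [abs_of_nonneg (by positivity)]
    exact pow_mul_pow_lt_one hy0 hy1.le hz0 hz1 _ p.1.2.ne_zero
  rw [one_div, log_inv]
  refine ((hasSum_pnat_pow_div hx).mul_left ((p.1.1 : ℝ) / (p.1.2 : ℝ) ^ 2)).congr_fun
    fun j => ?_
  simp only [Function.comp_apply, coe_coprimeMulEquiv_apply, PNat.mul_coe, Nat.cast_mul, pow_mul,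
    mul_pow]
  field_simp

end

theorem stmt_17 (y z : ℝ) (hy0 : 0 ≤ y) (hy1 : y < 1) (hz0 : 0 ≤ z) (hz1 : z < 1) :
    (∏' p : {p : ℕ+ × ℕ+ // p.1 ≤ p.2 ∧ Nat.gcd (p.1 : ℕ) (p.2 : ℕ) = 1},
        (1 / (1 - y ^ (p.val.1 : ℕ) * z ^ (p.val.2 : ℕ))) ^
          ((p.val.1 : ℝ) / (p.val.2 : ℝ) ^ 2) =
      (1 - y * z) ^ (y / (1 - y)) *
        Real.exp (y / (1 - y) ^ 2 * (Li2 z - Li2 (y * z)))) ∧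
    (∑' p : {p : ℕ+ × ℕ+ // p.1 ≤ p.2 ∧ Nat.gcd (p.1 : ℕ) (p.2 : ℕ) = 1},
        ((p.val.1 : ℝ) / (p.val.2 : ℝ) ^ 2) *
          Real.log (1 / (1 - y ^ (p.val.1 : ℕ) * z ^ (p.val.2 : ℕ))) =
      y / (1 - y) * Real.log (1 - y * z) + y / (1 - y) ^ 2 * (Li2 z - Li2 (y * z))) := by
  have hsum := hasSum_coprime_pairs_log hy0 hy1 hz0 hz1
  refine ⟨?_, hsum.tsum_eq⟩
  have hyz : 0 < 1 - y * z := by nlinarith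
  rw [rpow_def_of_pos hyz, mul_comm (log _), ← exp_add, ← hsum.rexp.tprod_eq]
  congr 1 with p
  have hx := pow_mul_pow_lt_one hy0 hy1.le hz0 hz1 (p.1.1 : ℕ) p.1.2.ne_zero
  rw [Function.comp_apply, rpow_def_of_pos (one_div_pos.2 (sub_pos.2 hx)), mul_comm]
end
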